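/- arXiv:0802.4067 — 2 statements merged into one kernel-verified Lean document; each statement's English description precedes it below -/
import Mathlib

section
/- Every open subfunctor 𝒰 of a Banach (resp. Fréchet, resp. locally convex) superrepresentable K̄-module V̄ in Top^Gr is a restriction: setting U = 𝒰(K) ⊆ V_0̄, one has 𝒰(Λ) = V̄(ε_Λ)^{-1}(U) for all Λ ∈ Gr, and 𝒰(φ) = V̄(φ)|_{𝒰(Λ)} for all morphisms φ : Λ → Λ' of Gr. -/
/-!
# Statement 10

Every open subfunctor `𝒰` of a Banach superrepresentable `K̄`-module `V̄` in
`Top^Gr` is a restriction: setting `U = 𝒰(K) ⊆ V_0̄`, one has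
`𝒰(Λ) = V̄(ε_Λ)⁻¹(U)` for all `Λ ∈ Gr` (and the maps `𝒰(φ)` are the restrictions
`V̄(φ)|_{𝒰(Λ)}`, which in this encoding of subfunctors holds by construction).

Here the Grassmann algebra `Λ_n` is realized in its standard basis (coefficients
indexed by subsets of `{1,…,n}`), so that
`V̄(Λ_n) = (Λ_n ⊗ V)_0̄ = ∏_{S ⊆ {1,…,n}} V_{|S| mod 2}` is a Banach space.  An open
subfunctor is a family of open subsets `𝒰(Λ_n) ⊆ V̄(Λ_n)` stable under the maps
`V̄(φ)` for all morphisms `φ` of `Gr`.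
-/
set_option synthInstance.maxHeartbeats 400000
set_option maxHeartbeats 1000000

noncomputable section

variable (K : Type) [RCLike K]

/-- The Grassmann algebra `Λ_n = ⋀(K^n)` on `n` odd generators over `K`, realized in
its standard basis: an element is the family of its coefficients indexed by the
subsets of `{1,…,n}`. -/
abbrev GrF (n : ℕ) : Type := Finset (Fin n) → K

/-- The sign `(-1)^{#inversions}` appearing in the product of two basis monomials
`ξ_T ξ_U = grSign T U · ξ_{T ∪ U}` (for disjoint `T`, `U`). -/
def grSign (n : ℕ) (T U : Finset (Fin n)) : K :=
  (-1 : K) ^ ((T ×ˢ U).filter fun p => p.2 < p.1).card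

/-- The multiplication of the Grassmann algebra in the standard basis. -/
def grMulF (n : ℕ) (a b : GrF K n) : GrF K n :=
  fun S => ∑ T ∈ S.powerset, grSign K n T (S \ T) * a T * b (S \ T)

/-- The unit `1 = ξ_∅`. -/
def grOneF (n : ℕ) : GrF K n := fun S => if S = ∅ then 1 else 0

/-- The basis monomial `ξ_S`. -/
def deltaF (n : ℕ) (S : Finset (Fin n)) : GrF K n := fun T => if T = S then 1 else 0

/-- `a` is homogeneous of parity `i` (supported on subsets of cardinality `≡ i`). -/
def grHomogF (n : ℕ) (i : ZMod 2) (a : GrF K n) : Prop :=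
  ∀ S : Finset (Fin n), (S.card : ZMod 2) ≠ i → a S = 0

/-- A morphism of the category `Gr`: a parity-preserving unital `K`-algebra
homomorphism between Grassmann algebras. -/
structure GrHomF (n m : ℕ) : Type where
  toLin : GrF K n →ₗ[K] GrF K m
  map_one : toLin (grOneF K n) = grOneF K m
  map_mul : ∀ a b, toLin (grMulF K n a b) = grMulF K m (toLin a) (toLin b)
  parity : ∀ (i : ZMod 2) (a : GrF K n), grHomogF K n i a → grHomogF K m i (toLin a)

/-- The identity morphism of `Gr`. -/
def grIdF (n : ℕ) : GrHomF K n n :=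
  ⟨LinearMap.id, rfl, fun _ _ => rfl, fun _ _ h => h⟩

/-- Composition in `Gr`. -/
def grCompF {n m k : ℕ} (φ : GrHomF K n m) (ψ : GrHomF K m k) : GrHomF K n k where
  toLin := ψ.toLin.comp φ.toLin
  map_one := by simp [LinearMap.comp_apply, φ.map_one, ψ.map_one]
  map_mul a b := by simp [LinearMap.comp_apply, φ.map_mul, ψ.map_mul]
  parity i a h := ψ.parity i _ (φ.parity i a h)

/-- The terminal morphism `ε_{Λ_n} : Λ_n → K = Λ_0` (evaluation of the coefficient
of `ξ_∅`). -/
def grEpsF (n : ℕ) : GrHomF K n 0 where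
  toLin :=
    { toFun := fun a => fun _ => a ∅
      map_add' := fun _ _ => rfl
      map_smul' := fun _ _ => rfl }
  map_one := by
    funext S
    have hS : S = ∅ := Finset.eq_empty_of_isEmpty S
    subst hS
    simp [grOneF]
  map_mul a b := by
    funext S
    have hS : S = ∅ := Finset.eq_empty_of_isEmpty S
    subst hS
    simp [grMulF, grSign]
  parity i a h S hS := by
    have hS' : S = ∅ := Finset.eq_empty_of_isEmpty S
    subst hS'
    exact h ∅ (by simpa using hS)

/-- A Banach super vector space over `K`: a `ℤ₂`-graded vector space whose
homogeneous components are Banach spaces. -/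
structure BanSuperVec where
  carrier : ZMod 2 → Type
  [nacg : ∀ i, NormedAddCommGroup (carrier i)]
  [nsp : ∀ i, NormedSpace K (carrier i)]
  [cpl : ∀ i, CompleteSpace (carrier i)]
attribute [instance] BanSuperVec.nacg BanSuperVec.nsp BanSuperVec.cpl

/-- The `Λ`-points of the functor `V̄ : Gr → Top`:
`V̄(Λ_n) = (Λ_n ⊗ V)_0̄ = ∏_{S ⊆ {1,…,n}} V_{|S| mod 2}` (coordinates with respect
to the standard basis of `Λ_n`), a Banach space. -/
abbrev barObjF (n : ℕ) (V : BanSuperVec K) : Type :=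
  ∀ S : Finset (Fin n), V.carrier (S.card : ZMod 2)

/-- Functoriality of `V̄`: the map `V̄(φ) = (φ ⊗ id_V)|_{V̄(Λ)}`, written out in the
standard basis. -/
def barMapF {n m : ℕ} (V : BanSuperVec K) (φ : GrHomF K n m) (x : barObjF K n V) :
    barObjF K m V :=
  fun S' => ∑ S : Finset (Fin n),
    if h : (S.card : ZMod 2) = (S'.card : ZMod 2) then
      φ.toLin (deltaF K n S) S' • (h ▸ x S)
    else 0

/-- The action of an (even) element `a` of `Λ_n` on `V̄(Λ_n)`, written out in the
standard basis:  `a • (ξ_R ⊗ v) = (a ξ_R) ⊗ v`. -/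
def barActF {n : ℕ} (V : BanSuperVec K) (a : GrF K n) (x : barObjF K n V) :
    barObjF K n V :=
  fun S => ∑ T ∈ S.powerset,
    if h : ((S \ T).card : ZMod 2) = (S.card : ZMod 2) then
      (grSign K n T (S \ T) * a T) • (h ▸ x (S \ T))
    else 0

/-- The body (underlying point) of an element of `V̄(Λ_n)`, i.e. its image in
`V̄(K) = V_0̄`. -/
def bodyF {n : ℕ} (V : BanSuperVec K) (x : barObjF K n V) : V.carrier 0 :=
  (by simp : (((∅ : Finset (Fin n)).card : ZMod 2)) = 0) ▸ x ∅

/-- The scaling endomorphism of `Λ_n` sending each generator `ξ_i` to `t ξ_i`. -/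
def scaleHom (n : ℕ) (t : K) : GrHomF K n n where
  toLin :=
    { toFun := fun a S => t ^ S.card * a S
      map_add' := fun a b => by funext S; simp [mul_add]
      map_smul' := fun c a => by funext S; simp [smul_eq_mul]; ring }
  map_one := by
    funext S; by_cases h : S = ∅ <;> simp [grOneF, h]
  map_mul := fun a b => by
    funext S
    show t ^ S.card * grMulF K n a b S = grMulF K n _ _ S
    simp only [grMulF, Finset.mul_sum]
    refine Finset.sum_congr rfl fun T hT => ?_
    have hsub : T ⊆ S := Finset.mem_powerset.mp hT
    have hcard : (S \ T).card + T.card = S.card := Finset.card_sdiff_add_card_eq_card hsub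
    rw [← hcard]
    simp only [LinearMap.coe_mk, AddHom.coe_mk]
    ring
  parity := fun i a h S hS => by
    show t ^ S.card * a S = 0
    rw [h S hS, mul_zero]

/-- The unit morphism `K = Λ_0 → Λ_n`. -/
def unitHom (n : ℕ) : GrHomF K 0 n where
  toLin :=
    { toFun := fun a S => if S = ∅ then a ∅ else 0
      map_add' := fun a b => by funext S; by_cases h : S = ∅ <;> simp [h]
      map_smul' := fun c a => by funext S; by_cases h : S = ∅ <;> simp [h] }
  map_one := by
    funext S; by_cases h : S = ∅ <;> simp [grOneF, h]
  map_mul := fun a b => by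
    funext S
    show (if S = ∅ then grMulF K 0 a b ∅ else 0) = grMulF K n _ _ S
    by_cases h : S = ∅
    · subst h
      simp [grMulF, grSign]
    · rw [if_neg h]
      symm
      apply Finset.sum_eq_zero
      intro T hT
      show grSign K n T (S \ T) * (if T = ∅ then a ∅ else 0) *
        (if S \ T = ∅ then b ∅ else 0) = 0
      by_cases hT0 : T = ∅
      · have : S \ T ≠ ∅ := by
          subst hT0; simpa using h
        rw [if_neg this, mul_zero]
      · rw [if_neg hT0, mul_zero, zero_mul]
  parity := fun i a h S hS => by
    show (if S = ∅ then a ∅ else 0) = 0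
    by_cases hS' : S = ∅
    · subst hS'; exact h ∅ (by simpa using hS)
    · rw [if_neg hS']

lemma barMapF_scale {n : ℕ} (V : BanSuperVec K) (t : K) (x : barObjF K n V) :
    barMapF K V (scaleHom K n t) x = fun S => t ^ S.card • x S := by
  funext S'
  unfold barMapF
  rw [Finset.sum_eq_single S']
  · rw [dif_pos rfl]
    have hc : (scaleHom K n t).toLin (deltaF K n S') S' = t ^ S'.card := by
      simp [scaleHom, deltaF]
    rw [hc]
  · intro S _ hne
    by_cases h : (S.card : ZMod 2) = (S'.card : ZMod 2)
    · rw [dif_pos h]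
      have hc : (scaleHom K n t).toLin (deltaF K n S) S' = 0 := by
        simp [scaleHom, deltaF, Ne.symm hne]
      rw [hc, zero_smul]
    · rw [dif_neg h]
  · intro h; exact absurd (Finset.mem_univ S') h

lemma barMapF_eps_apply {n : ℕ} (V : BanSuperVec K) (x : barObjF K n V) :
    barMapF K V (grEpsF K n) x ∅ = x ∅ := by
  unfold barMapF
  rw [Finset.sum_eq_single (∅ : Finset (Fin n))]
  · rw [dif_pos (by rfl)]
    have hc : (grEpsF K n).toLin (deltaF K n ∅) ∅ = 1 := by
      simp [grEpsF, deltaF]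
    rw [hc, one_smul]
  · intro S _ hne
    by_cases h : (S.card : ZMod 2) = (((∅ : Finset (Fin 0)).card : ZMod 2))
    · rw [dif_pos h]
      have hc : (grEpsF K n).toLin (deltaF K n S) ∅ = 0 := by
        simp [grEpsF, deltaF, Ne.symm hne]
      rw [hc, zero_smul]
    · rw [dif_neg h]
  · intro h; exact absurd (Finset.mem_univ _) h

lemma barMapF_unit_eps {n : ℕ} (V : BanSuperVec K) (x : barObjF K n V) :
    barMapF K V (unitHom K n) (barMapF K V (grEpsF K n) x)
      = barMapF K V (scaleHom K n 0) x := by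
  set z := barMapF K V (grEpsF K n) x with hz
  rw [barMapF_scale]
  funext S
  unfold barMapF
  have huniv : (Finset.univ : Finset (Finset (Fin 0))) = {∅} := rfl
  rw [huniv, Finset.sum_singleton]
  by_cases hS : S = ∅
  · subst hS
    rw [dif_pos (by rfl)]
    have hc : (unitHom K n).toLin (deltaF K 0 ∅) ∅ = 1 := by
      simp [unitHom, deltaF]
    rw [hc, one_smul]
    have : z ∅ = x ∅ := barMapF_eps_apply K V x
    rw [show ((0:K) ^ (∅ : Finset (Fin n)).card • x ∅) = x ∅ by
      simp only [Finset.card_empty, pow_zero]; exact one_smul K (x ∅)]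
    exact this
  · have hcard : S.card ≠ 0 := fun h => hS (Finset.card_eq_zero.mp h)
    have hr : (0 : K) ^ S.card • x S = 0 := by
      rw [zero_pow hcard, zero_smul]
    rw [hr]
    by_cases h : (((∅ : Finset (Fin 0)).card : ZMod 2)) = (S.card : ZMod 2)
    · rw [dif_pos h]
      have hc : (unitHom K n).toLin (deltaF K 0 ∅) S = 0 := by
        simp [unitHom, deltaF, hS]
      rw [hc, zero_smul]
    · rw [dif_neg h]

/-- Every open subfunctor `𝒰 ⊆ V̄` of a Banach superrepresentable
`K̄`-module is the restriction `V̄|_U` with `U = 𝒰(K)`: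
`𝒰(Λ_n) = V̄(ε_{Λ_n})⁻¹(𝒰(K))` for every `n`. -/
theorem statement10 (V : BanSuperVec K) (U : ∀ n : ℕ, Set (barObjF K n V))
    (hopen : ∀ n, IsOpen (U n))
    (hfunc : ∀ {n m : ℕ} (φ : GrHomF K n m), Set.MapsTo (barMapF K V φ) (U n) (U m)) :
    ∀ n : ℕ, U n = barMapF K V (grEpsF K n) ⁻¹' U 0 := by
  intro n
  ext x
  simp only [Set.mem_preimage]
  constructor
  · intro hx
    exact hfunc (grEpsF K n) hx
  · intro hx
    have h0 : (fun S : Finset (Fin n) => (0 : K) ^ S.card • x S) ∈ U n := by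
      have h1 := hfunc (unitHom K n) hx
      rwa [barMapF_unit_eps, barMapF_scale] at h1
    have hcont : Continuous (fun t : K => fun S : Finset (Fin n) => t ^ S.card • x S) :=
      continuous_pi fun S => (continuous_pow S.card).smul continuous_const
    have hnhds : (fun t : K => fun S : Finset (Fin n) => t ^ S.card • x S) ⁻¹' (U n)
        ∈ nhds (0 : K) :=
      hcont.continuousAt.preimage_mem_nhds ((hopen n).mem_nhds h0)
    obtain ⟨r, hr, hball⟩ := Metric.mem_nhds_iff.mp hnhds
    set t : K := ((r / 2 : ℝ) : K) with ht_def
    have htnorm : ‖t‖ = r / 2 := by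
      rw [ht_def, RCLike.norm_ofReal, abs_of_pos (by linarith)]
    have ht : t ≠ 0 := by
      intro h
      rw [h, norm_zero] at htnorm
      linarith
    have htmem : t ∈ Metric.ball (0 : K) r := by
      rw [Metric.mem_ball, dist_zero_right, htnorm]
      linarith
    have htU : (fun S : Finset (Fin n) => t ^ S.card • x S) ∈ U n := hball htmem
    have h2 := hfunc (scaleHom K n t⁻¹) htU
    rw [barMapF_scale] at h2
    have heq : (fun S : Finset (Fin n) =>
        t⁻¹ ^ S.card • ((fun S : Finset (Fin n) => t ^ S.card • x S) S)) = x := by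
      funext S
      show t⁻¹ ^ S.card • (t ^ S.card • x S) = x S
      rw [smul_smul, ← mul_pow, inv_mul_cancel₀ ht, one_pow, one_smul]
    rwa [heq] at h2

end
end

section
/- Let ℱ ∈ Top^Gr be a functor which is locally isomorphic to Banach (resp. Fréchet, resp. locally convex) superdomains, i.e. admits an open covering {u_α : 𝒰_α → ℱ} by superdomains. Then every open subfunctor 𝒰 ⊆ ℱ is a restriction ℱ|_U with U = 𝒰(K): one has 𝒰(Λ) = ℱ(ε_Λ)^{-1}(U) for all Λ and 𝒰(φ) = ℱ(φ)|_{𝒰(Λ)} for all morphisms φ of Gr. -/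
/-!
# Statement 11

Let `ℱ ∈ Top^Gr` be a functor which is locally isomorphic to Banach superdomains,
i.e. admits an open covering `{u_α : 𝒰_α → ℱ}` by Banach superdomains.  Then every
open subfunctor `𝒰 ⊆ ℱ` is a restriction `ℱ|_U` with `U = 𝒰(K)`: one has
`𝒰(Λ_n) = ℱ(ε_{Λ_n})⁻¹(𝒰(K))` for all `n` (and on morphisms `𝒰(φ)` is the
restriction of `ℱ(φ)`, which in this encoding holds by construction).

The Grassmann algebra `Λ_n` is realized in its standard basis, so that
`V̄(Λ_n) = ∏_{S ⊆ {1,…,n}} V_{|S| mod 2}`; a Banach superdomain is the restriction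
`V̄|_{U₀}` of a Banach superrepresentable module to an open set `U₀ ⊆ V_0̄`; an open
covering consists of open embeddings, natural in `Λ`, whose images cover each
`ℱ(Λ)`.
-/
set_option synthInstance.maxHeartbeats 400000
set_option maxHeartbeats 1000000

noncomputable section

variable (K : Type) [RCLike K]

/-- A functor `Gr → Top`. -/
structure TopFuncF : Type 1 where
  obj : ℕ → Type
  [top : ∀ n, TopologicalSpace (obj n)]
  map : ∀ {n m : ℕ}, GrHomF K n m → obj n → obj m
  map_cont : ∀ {n m : ℕ} (φ : GrHomF K n m), Continuous (map φ)
  map_id : ∀ (n : ℕ) (x : obj n), map (grIdF K n) x = x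
  map_comp : ∀ {n m k : ℕ} (φ : GrHomF K n m) (ψ : GrHomF K m k) (x : obj n),
    map (grCompF K φ ψ) x = map ψ (map φ x)
attribute [instance] TopFuncF.top

/-- The points of the Banach superdomain `V̄|_{U₀}` over `Λ_n`:
`(V̄|_{U₀})(Λ_n) = V̄(ε_{Λ_n})⁻¹(U₀)`. -/
def sdSet (V : BanSuperVec K) (U₀ : Set (V.carrier 0)) (n : ℕ) : Set (barObjF K n V) :=
  {x | bodyF K V x ∈ U₀}

/-! ### Auxiliary material for the proof -/

theorem GrHomF.ext' {n m : ℕ} {φ ψ : GrHomF K n m} (h : φ.toLin = ψ.toLin) : φ = ψ := by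
  cases φ; cases ψ; cases h; rfl

/-- The scaling morphism `ρ_t : Λ_n → Λ_n`, `ξ_i ↦ t ξ_i`. -/
def grScale (n : ℕ) (t : K) : GrHomF K n n where
  toLin :=
    { toFun := fun a S => t ^ S.card * a S
      map_add' := fun a b => funext fun S => by simp [mul_add]
      map_smul' := fun c a => funext fun S => by simp; ring }
  map_one := funext fun S => by
    rcases eq_or_ne S ∅ with h | h <;> simp [grOneF, h]
  map_mul a b := funext fun S => by
    simp only [LinearMap.coe_mk, AddHom.coe_mk, grMulF, Finset.mul_sum]
    refine Finset.sum_congr rfl fun T hT => ?_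
    have hsub : T ⊆ S := Finset.mem_powerset.mp hT
    have hcard : (S \ T).card + T.card = S.card :=
      Finset.card_sdiff_add_card_eq_card hsub
    rw [← hcard, pow_add]; ring
  parity i a h S hS := by
    simp only [LinearMap.coe_mk, AddHom.coe_mk]
    rw [h S hS, mul_zero]

/-- The unit morphism `η_n : K = Λ_0 → Λ_n`. -/
def grUnit (n : ℕ) : GrHomF K 0 n where
  toLin :=
    { toFun := fun a S => if S = ∅ then a ∅ else 0
      map_add' := fun a b => funext fun S => by dsimp; split <;> simp
      map_smul' := fun c a => funext fun S => by dsimp; split <;> simp }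
  map_one := funext fun S => by
    rcases eq_or_ne S ∅ with h | h <;> simp [grOneF, h]
  map_mul a b := funext fun S => by
    simp only [LinearMap.coe_mk, AddHom.coe_mk]
    rcases eq_or_ne S ∅ with h | h
    · subst h
      simp [grMulF, grSign]
    · rw [if_neg h]
      symm
      refine Finset.sum_eq_zero fun T hT => ?_
      rcases eq_or_ne T ∅ with hT0 | hT0
      · subst hT0
        simp [Finset.sdiff_empty, h]
      · simp [hT0]
  parity i a h S hS := by
    simp only [LinearMap.coe_mk, AddHom.coe_mk]
    rcases eq_or_ne S ∅ with h0 | h0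
    · subst h0
      rw [if_pos rfl]
      exact h ∅ (by simpa using hS)
    · rw [if_neg h0]

theorem grScale_comp (n : ℕ) (t s : K) :
    grCompF K (grScale K n t) (grScale K n s) = grScale K n (t * s) := by
  refine GrHomF.ext' K ?_
  refine LinearMap.ext fun a => funext fun S => ?_
  simp [grCompF, grScale, mul_pow]; ring

theorem grScale_one (n : ℕ) : grScale K n 1 = grIdF K n := by
  refine GrHomF.ext' K ?_
  refine LinearMap.ext fun a => funext fun S => ?_
  simp [grScale, grIdF]

theorem grScale_zero (n : ℕ) :
    grScale K n 0 = grCompF K (grEpsF K n) (grUnit K n) := by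
  refine GrHomF.ext' K ?_
  refine LinearMap.ext fun a => funext fun S => ?_
  rcases eq_or_ne S ∅ with h | h
  · subst h; simp [grScale, grCompF, grEpsF, grUnit]
  · have hc : S.card ≠ 0 := fun hc => h (Finset.card_eq_zero.mp hc)
    simp [grScale, grCompF, grEpsF, grUnit, h, zero_pow hc]

theorem grScale_inv (n : ℕ) (t : K) (ht : t ≠ 0) :
    grCompF K (grScale K n t) (grScale K n t⁻¹) = grIdF K n := by
  refine GrHomF.ext' K ?_
  refine LinearMap.ext fun a => funext fun S => ?_
  show (grScale K n t⁻¹).toLin ((grScale K n t).toLin a) S = a S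
  show t⁻¹ ^ S.card * (t ^ S.card * a S) = a S
  rw [← mul_assoc, ← mul_pow, inv_mul_cancel₀ ht, one_pow, one_mul]

theorem barMapF_grScale (n : ℕ) (V : BanSuperVec K) (t : K) (x : barObjF K n V) :
    barMapF K V (grScale K n t) x = fun S => t ^ S.card • x S := by
  funext S'
  unfold barMapF
  rw [Finset.sum_eq_single S']
  · rw [dif_pos rfl]
    show (t ^ S'.card * deltaF K n S' S') • _ = _
    simp [deltaF]
  · intro S _ hne
    split
    · show (t ^ S'.card * deltaF K n S S') • _ = 0
      rw [deltaF, if_neg (Ne.symm hne), mul_zero, zero_smul]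
    · rfl
  · intro h; exact absurd (Finset.mem_univ S') h

theorem bodyF_smul (n : ℕ) (V : BanSuperVec K) (t : K) (x : barObjF K n V) :
    bodyF K V (fun S => t ^ S.card • x S) = bodyF K V x := by
  unfold bodyF
  simp
  exact one_smul K _

/-- If `ℱ ∈ Top^Gr` admits an open covering by Banach
superdomains `u_α : V̄_α|_{U₀ α} → ℱ` (open embeddings, natural in `Λ`, with
covering images), then every open subfunctor `𝒰 ⊆ ℱ` (a family of open subsets
stable under all maps `ℱ(φ)`) is the restriction `ℱ|_U` with `U = 𝒰(K)`:
`𝒰(Λ_n) = ℱ(ε_{Λ_n})⁻¹(𝒰(K))` for every `n`. -/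
theorem statement11 (ℱ : TopFuncF K)
    -- an open covering of ℱ by Banach superdomains:
    (ι : Type) (Vdom : ι → BanSuperVec K) (U₀ : ∀ a : ι, Set ((Vdom a).carrier 0))
    (hU₀ : ∀ a, IsOpen (U₀ a))
    (u : ∀ (a : ι) (n : ℕ), sdSet K (Vdom a) (U₀ a) n → ℱ.obj n)
    (hu_emb : ∀ a n, Topology.IsOpenEmbedding (u a n))
    -- naturality of the charts (the maps `V̄(φ)` preserve the body, so they
    -- restrict to the superdomains; the membership is taken as a hypothesis):
    (hu_nat : ∀ (a : ι) {n m : ℕ} (φ : GrHomF K n m) (x : sdSet K (Vdom a) (U₀ a) n)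
      (hy : barMapF K (Vdom a) φ x.1 ∈ sdSet K (Vdom a) (U₀ a) m),
      u a m ⟨barMapF K (Vdom a) φ x.1, hy⟩ = ℱ.map φ (u a n x))
    (hu_cover : ∀ (n : ℕ) (y : ℱ.obj n), ∃ (a : ι) (x : sdSet K (Vdom a) (U₀ a) n),
      u a n x = y)
    -- an open subfunctor 𝒰 ⊆ ℱ:
    (W : ∀ n : ℕ, Set (ℱ.obj n))
    (hWopen : ∀ n, IsOpen (W n))
    (hWfunc : ∀ {n m : ℕ} (φ : GrHomF K n m), Set.MapsTo (ℱ.map φ) (W n) (W m)) :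
    ∀ n : ℕ, W n = ℱ.map (grEpsF K n) ⁻¹' W 0 := by
  intro n
  ext x
  simp only [Set.mem_preimage]
  constructor
  · intro hx
    exact hWfunc (grEpsF K n) hx
  · intro hx0
    obtain ⟨a, v, huv⟩ := hu_cover n x
    -- the scaled family
    have hmem : ∀ t : K,
        (fun S => t ^ S.card • v.1 S) ∈ sdSet K (Vdom a) (U₀ a) n := by
      intro t
      show bodyF K (Vdom a) _ ∈ U₀ a
      rw [bodyF_smul]
      exact v.2
    have hnat : ∀ t : K,
        u a n ⟨fun S => t ^ S.card • v.1 S, hmem t⟩ = ℱ.map (grScale K n t) x := by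
      intro t
      have hy : barMapF K (Vdom a) (grScale K n t) v.1 ∈ sdSet K (Vdom a) (U₀ a) n := by
        rw [barMapF_grScale]; exact hmem t
      have h2 : (⟨barMapF K (Vdom a) (grScale K n t) v.1, hy⟩ :
          sdSet K (Vdom a) (U₀ a) n) = ⟨fun S => t ^ S.card • v.1 S, hmem t⟩ :=
        Subtype.ext (barMapF_grScale K n (Vdom a) t v.1)
      rw [← h2, hu_nat a (grScale K n t) v hy, huv]
    have hcont : Continuous fun t : K => ℱ.map (grScale K n t) x := by
      have h1 : Continuous fun t : K =>
          (⟨fun S => t ^ S.card • v.1 S, hmem t⟩ : sdSet K (Vdom a) (U₀ a) n) :=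
        Continuous.subtype_mk
          (continuous_pi fun (S : Finset (Fin n)) => (continuous_pow S.card).smul continuous_const) _
      exact (((hu_emb a n).continuous).comp h1).congr hnat
    have h0 : ℱ.map (grScale K n 0) x ∈ W n := by
      rw [grScale_zero, ℱ.map_comp]
      exact hWfunc (grUnit K n) hx0
    have hopen : IsOpen {t : K | ℱ.map (grScale K n t) x ∈ W n} :=
      (hWopen n).preimage hcont
    obtain ⟨ε, hε, hball⟩ := Metric.isOpen_iff.mp hopen 0 h0
    set t : K := ((ε / 2 : ℝ) : K) with ht_def
    have htne : t ≠ 0 := by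
      rw [ht_def]
      simpa using (by linarith : ε / 2 ≠ 0)
    have htmem : t ∈ Metric.ball (0 : K) ε := by
      rw [Metric.mem_ball, dist_zero_right, ht_def, RCLike.norm_ofReal,
        abs_of_pos (by linarith)]
      linarith
    have ht : ℱ.map (grScale K n t) x ∈ W n := hball htmem
    have hfin : ℱ.map (grScale K n t⁻¹) (ℱ.map (grScale K n t) x) ∈ W n :=
      hWfunc (grScale K n t⁻¹) ht
    rw [← ℱ.map_comp, grScale_inv K n t htne, ℱ.map_id] at hfin
    exact hfin

end
end
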